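/- arXiv:math/0702868 — 2 statements merged into one kernel-verified Lean document; each statement's English description precedes it below -/
import Mathlib

section
/- Finitely additive measure property of the q-Euler measure: let p be an odd prime, d an odd positive integer coprime to p, and define μ*_k(a + dp^N ℤ_p) := (-1)^a [dp^N]_q^k ([2]_q/[2]_{q^{dp^N}}) E_{k, q^{dp^N}}(a/(dp^N)), where E_{k,Q}(t) = (1+Q)(1-Q)^{-k} ∑_{l=0}^{k} (-1)^l C(k,l) Q^{tl}/(1+Q^l). Then for all 0 ≤ a < dp^N: ∑_{i=0}^{p-1} μ*_k(a + i·dp^N + dp^{N+1} ℤ_p) = μ*_k(a + dp^N ℤ_p). -/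
/-!
Write `M = d p^N`, which is odd. The normalising factors `[M]_q^k [2]_q / [2]_{q^M}` cancel against
`(1 + q^M)(1 - q^M)^{-k}` in `E_{k,q^M}`, so `μ*_k(a + Mℤ_p)` is `[2]_q (1 - q)^{-k}` times
`(-1)^a ∑_l (-1)^l C(k,l) q^{al} / (1 + q^{Ml})`. Passing from `M` to `Mp`, the `l`-th term of the
sum over `i` contains the alternating geometric sum `∑_{i<p} (-q^{Ml})^i = (1 + q^{Mpl}) / (1 + q^{Ml})`
(`p` odd), which turns the denominator `1 + q^{Mpl}` back into `1 + q^{Ml}`.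
-/

/-- The q-Euler polynomial `E_{k,Q}(t)` expressed through the element `Qt = Q^t`. -/
noncomputable def qEulerPolyAt {K : Type*} [Field K] (Q Qt : K) (k : ℕ) : K :=
  (1 + Q) * ((1 - Q)⁻¹) ^ k *
    ∑ l ∈ Finset.range (k + 1), (-1 : K) ^ l * (k.choose l : K) * Qt ^ l / (1 + Q ^ l)

open Finset

theorem one_add_mul_geom_sum_neg {R : Type*} [CommRing R] {p : ℕ} (hp : Odd p) (x : R) :
    (1 + x) * ∑ i ∈ range p, (-x) ^ i = 1 + x ^ p := by
  simpa [hp.neg_pow] using mul_neg_geom_sum (-x) p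

theorem geom_sum_neg_div_one_add_pow {K : Type*} [Field K] {p : ℕ} (hp : Odd p) {x : K}
    (hx : 1 + x ^ p ≠ 0) :
    (∑ i ∈ range p, (-x) ^ i) / (1 + x ^ p) = (1 + x)⁻¹ := by
  rw [← one_add_mul_geom_sum_neg hp x] at hx ⊢
  exact div_mul_cancel_right₀ (right_ne_zero_of_mul hx) _

section

variable {K : Type*} [Field K]

noncomputable def qEulerSum (Q Y : K) (k : ℕ) : K :=
  ∑ l ∈ range (k + 1), (-1 : K) ^ l * (k.choose l : K) * Y ^ l / (1 + Q ^ l)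

/-- `μ*_k(a + Mℤ_p)`, with `(q^M)^{a/M}` written as `q^a`. -/
noncomputable def qEulerMeasure (q : K) (k M a : ℕ) : K :=
  (-1) ^ a * ((1 - q ^ M) / (1 - q)) ^ k * ((1 + q) / (1 + q ^ M)) *
    qEulerPolyAt (q ^ M) (q ^ a) k

theorem qEulerMeasure_eq {q : K} {M : ℕ} (hM1 : q ^ M ≠ 1) (hM2 : 1 + q ^ M ≠ 0) (k a : ℕ) :
    qEulerMeasure q k M a =
      (1 + q) * ((1 - q)⁻¹) ^ k * ((-1) ^ a * qEulerSum (q ^ M) (q ^ a) k) := by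
  have hpow : (1 - q ^ M) ^ k * ((1 - q ^ M)⁻¹) ^ k = 1 := by
    rw [← mul_pow, mul_inv_cancel₀ (sub_ne_zero.mpr hM1.symm), one_pow]
  have hinv : (1 + q ^ M) * (1 + q ^ M)⁻¹ = 1 := mul_inv_cancel₀ hM2
  rw [qEulerMeasure, qEulerPolyAt, ← qEulerSum, div_pow, div_eq_mul_inv, div_eq_mul_inv]
  linear_combination (1 + q) * ((1 - q)⁻¹) ^ k * ((-1) ^ a * qEulerSum (q ^ M) (q ^ a) k) *
    ((1 + q ^ M) * (1 + q ^ M)⁻¹ * hpow + hinv)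

theorem sum_neg_one_pow_mul_pow_div {p M : ℕ} (hp : Odd p) (hM : Odd M) (q : K) (a l : ℕ)
    (h : 1 + (q ^ (M * p)) ^ l ≠ 0) :
    ∑ i ∈ range p, (-1) ^ (a + i * M) * (q ^ (a + i * M)) ^ l / (1 + (q ^ (M * p)) ^ l)
      = (-1) ^ a * (q ^ a) ^ l / (1 + (q ^ M) ^ l) := by
  set x := (q ^ M) ^ l
  have hxp : (q ^ (M * p)) ^ l = x ^ p := by
    simp only [x, ← pow_mul]
    ring_nf
  have hterm : ∀ i, (-1 : K) ^ (a + i * M) * (q ^ (a + i * M)) ^ l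
      = (-1) ^ a * (q ^ a) ^ l * (-x) ^ i := by
    intro i
    rw [pow_add (-1 : K), mul_comm i M, pow_mul (-1 : K), hM.neg_one_pow, neg_pow x]
    ring
  simp_rw [hxp, hterm, ← sum_div, ← mul_sum]
  rw [hxp] at h
  rw [mul_div_assoc, geom_sum_neg_div_one_add_pow hp h, div_eq_mul_inv]

theorem sum_neg_one_pow_mul_qEulerSum {p M : ℕ} (hp : Odd p) (hM : Odd M) {q : K}
    (h : ∀ j, 1 + q ^ j ≠ 0) (k a : ℕ) :
    ∑ i ∈ range p, (-1) ^ (a + i * M) * qEulerSum (q ^ (M * p)) (q ^ (a + i * M)) k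
      = (-1) ^ a * qEulerSum (q ^ M) (q ^ a) k := by
  simp only [qEulerSum, mul_sum]
  rw [sum_comm]
  refine sum_congr rfl fun l _ => ?_
  have hl : 1 + (q ^ (M * p)) ^ l ≠ 0 := by
    rw [← pow_mul]
    exact h _
  calc _ = (-1) ^ l * (k.choose l : K) * ∑ i ∈ range p,
          (-1) ^ (a + i * M) * (q ^ (a + i * M)) ^ l / (1 + (q ^ (M * p)) ^ l) := by
        rw [mul_sum]
        exact sum_congr rfl fun i _ => by ring
    _ = _ := by
        rw [sum_neg_one_pow_mul_pow_div hp hM q a l hl]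
        ring

theorem sum_qEulerMeasure {p M : ℕ} (hp : Odd p) (hM : Odd M) {q : K}
    (hM1 : q ^ M ≠ 1) (hMp1 : q ^ (M * p) ≠ 1) (h : ∀ j, 1 + q ^ j ≠ 0) (k a : ℕ) :
    ∑ i ∈ range p, qEulerMeasure q k (M * p) (a + i * M) = qEulerMeasure q k M a := by
  simp_rw [qEulerMeasure_eq hMp1 (h _), qEulerMeasure_eq hM1 (h _), ← mul_sum,
    sum_neg_one_pow_mul_qEulerSum hp hM h]

end

theorem qEuler_measure_additive_general {K : Type*} [Field K] [CharZero K]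
    (q : K) (p d N k a : ℕ) (hpo : Odd p)
    (hdo : Odd d)
    (hqj : ∀ j : ℕ, 1 ≤ j → q ^ j ≠ 1)
    (h2 : ∀ j : ℕ, 1 ≤ j → 1 + q ^ j ≠ 0) :
    ∑ i ∈ Finset.range p,
        (-1 : K) ^ (a + i * (d * p ^ N)) * ((1 - q ^ (d * p ^ (N + 1))) / (1 - q)) ^ k *
          ((1 + q) / (1 + q ^ (d * p ^ (N + 1)))) *
            qEulerPolyAt (q ^ (d * p ^ (N + 1))) (q ^ (a + i * (d * p ^ N))) k
      = (-1 : K) ^ a * ((1 - q ^ (d * p ^ N)) / (1 - q)) ^ k *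
          ((1 + q) / (1 + q ^ (d * p ^ N))) * qEulerPolyAt (q ^ (d * p ^ N)) (q ^ a) k := by
  have hM : Odd (d * p ^ N) := hdo.mul hpo.pow
  have h2' : ∀ j, (1 : K) + q ^ j ≠ 0 := by
    rintro (_ | j)
    · norm_num
    · exact h2 _ j.succ_pos
  rw [show d * p ^ (N + 1) = d * p ^ N * p by ring]
  exact sum_qEulerMeasure hpo hM (hqj _ hM.pos) (hqj _ (Nat.mul_pos hM.pos hpo.pos)) h2' k a

/-- Finite additivity of the q-Euler measure
`μ*_k(a + dp^N ℤ_p) = (-1)^a [dp^N]_q^k ([2]_q/[2]_{q^{dp^N}}) E_{k,q^{dp^N}}(a/(dp^N))`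
(note `(q^{dp^N})^{a/(dp^N)} = q^a`): for `0 ≤ a < dp^N`,
`∑_{i=0}^{p-1} μ*_k(a + i dp^N + dp^{N+1} ℤ_p) = μ*_k(a + dp^N ℤ_p)`. -/
theorem qEuler_measure_additive {K : Type*} [Field K] [CharZero K]
    (q : K) (p d N k a : ℕ) (hp : Nat.Prime p) (hpo : Odd p)
    (hdo : Odd d) (hd0 : 0 < d) (hcop : Nat.Coprime d p)
    (hN : 1 ≤ N) (hk : 1 ≤ k) (ha : a < d * p ^ N)
    (hq : q ≠ 1) (hqj : ∀ j : ℕ, 1 ≤ j → q ^ j ≠ 1)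
    (h2 : ∀ j : ℕ, 1 ≤ j → 1 + q ^ j ≠ 0) :
    ∑ i ∈ Finset.range p,
        (-1 : K) ^ (a + i * (d * p ^ N)) * ((1 - q ^ (d * p ^ (N + 1))) / (1 - q)) ^ k *
          ((1 + q) / (1 + q ^ (d * p ^ (N + 1)))) *
            qEulerPolyAt (q ^ (d * p ^ (N + 1))) (q ^ (a + i * (d * p ^ N))) k
      = (-1 : K) ^ a * ((1 - q ^ (d * p ^ N)) / (1 - q)) ^ k *
          ((1 + q) / (1 + q ^ (d * p ^ N))) * qEulerPolyAt (q ^ (d * p ^ N)) (q ^ a) k :=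
  qEuler_measure_additive_general q p d N k a hpo hdo hqj h2
end

section
/- Boundedness of the q-Euler measure: with notation as above (p odd prime, q ∈ ℂ_p, |q-1|_p < p^{-1/(p-1)}, k a positive integer, d odd coprime to p), there exists a constant M such that for all N ≥ 1 and all 0 ≤ a < dp^N, |μ*_k(a + dp^N ℤ_p)|_p ≤ M, where μ*_k(a + dp^N ℤ_p) = (-1)^a [dp^N]_q^k ([2]_q/[2]_{q^{dp^N}}) E_{k,q^{dp^N}}(a/(dp^N)). -/
namespace IsUltrametricDist

section SeminormedRing

variable {R : Type*} [SeminormedRing R] [IsUltrametricDist R]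

lemma norm_one_add_eq_one {x : R} (h2 : ‖(2 : R)‖ = 1) (hx : ‖x - 1‖ < 1) : ‖1 + x‖ = 1 := by
  rw [show 1 + x = (x - 1) + 2 by rw [← one_add_one_eq_two]; abel,
    norm_add_eq_max_of_norm_ne_norm (by rw [h2]; exact hx.ne), h2, max_eq_right hx.le]

variable [NormOneClass R]

lemma norm_le_one_of_norm_sub_one_le_one {x : R} (hx : ‖x - 1‖ ≤ 1) : ‖x‖ ≤ 1 := by
  simpa [hx] using norm_add_one_le_max_norm_one (x - 1)

lemma norm_pow_sub_one_le {x : R} (hx : ‖x‖ ≤ 1) (n : ℕ) : ‖x ^ n - 1‖ ≤ ‖x - 1‖ := by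
  have hgeom : ‖∑ i ∈ Finset.range n, x ^ i‖ ≤ 1 :=
    norm_sum_le_of_forall_le_of_nonneg zero_le_one fun i _ =>
      (_root_.norm_pow_le x i).trans (pow_le_one₀ (norm_nonneg x) hx)
  calc ‖x ^ n - 1‖ = ‖(∑ i ∈ Finset.range n, x ^ i) * (x - 1)‖ := by rw [geom_sum_mul]
    _ ≤ ‖∑ i ∈ Finset.range n, x ^ i‖ * ‖x - 1‖ := norm_mul_le _ _
    _ ≤ ‖x - 1‖ := mul_le_of_le_one_left (norm_nonneg _) hgeom

/-- `1 = p - 2c` for `p = 2c + 1`, so `‖2‖ < 1` would give `‖1‖ < 1`. -/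
lemma norm_two_eq_one_of_odd {p : ℕ} (hp : Odd p) (hnp : ‖(p : R)‖ < 1) : ‖(2 : R)‖ = 1 := by
  refine le_antisymm (by simpa using norm_natCast_le_one R 2) (not_lt.mp fun h2 => ?_)
  obtain ⟨c, rfl⟩ := hp
  have h2c : ‖(2 : R) * c‖ < 1 :=
    (norm_mul_le _ _).trans_lt
      (mul_lt_one_of_nonneg_of_lt_one_left (norm_nonneg _) h2 (norm_natCast_le_one R c))
  have h1 := norm_add_le_max ((2 * c + 1 : ℕ) : R) (-((2 : R) * c))
  rw [show ((2 * c + 1 : ℕ) : R) + -((2 : R) * c) = 1 by push_cast; abel, norm_neg, norm_one] at h1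
  exact (max_lt hnp h2c).not_ge h1

end SeminormedRing

lemma norm_qEulerPolyAt_le {K : Type*} [NormedField K] [IsUltrametricDist K] {Q Qt : K}
    (hQt : ‖Qt‖ ≤ 1) (hQ : ∀ l : ℕ, ‖1 + Q ^ l‖ = 1) (k : ℕ) :
    ‖qEulerPolyAt Q Qt k‖ ≤ ‖(1 - Q)⁻¹‖ ^ k := by
  have hsum : ‖∑ l ∈ Finset.range (k + 1),
      (-1 : K) ^ l * (k.choose l : K) * Qt ^ l / (1 + Q ^ l)‖ ≤ 1 := by
    refine norm_sum_le_of_forall_le_of_nonneg zero_le_one fun l _ => ?_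
    rw [norm_div, hQ, div_one, norm_mul, norm_mul, norm_pow, norm_neg, norm_one, one_pow,
      one_mul, norm_pow]
    exact mul_le_one₀ (norm_natCast_le_one K _) (by positivity) (pow_le_one₀ (norm_nonneg _) hQt)
  rw [qEulerPolyAt, norm_mul, norm_mul, (by simpa using hQ 1 : ‖1 + Q‖ = 1), one_mul, norm_pow]
  exact mul_le_of_le_one_right (by positivity) hsum

end IsUltrametricDist

open IsUltrametricDist in
theorem qEuler_measure_bounded_general {K : Type*} [NontriviallyNormedField K]
    [IsUltrametricDist K]
    (p : ℕ) (hp : Nat.Prime p) (hpo : Odd p) (hnp : ‖(p : K)‖ = (p : ℝ)⁻¹)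
    (q : K) (hq : ‖q - 1‖ < (p : ℝ) ^ (-1 / ((p : ℝ) - 1)))
    (k : ℕ) (d : ℕ) :
    ∃ M : ℝ, ∀ N : ℕ, 1 ≤ N → ∀ a : ℕ, a < d * p ^ N →
      ‖(-1 : K) ^ a * ((1 - q ^ (d * p ^ N)) / (1 - q)) ^ k *
          ((1 + q) / (1 + q ^ (d * p ^ N))) *
            qEulerPolyAt (q ^ (d * p ^ N)) (q ^ a) k‖ ≤ M := by
  have hp1 : (1 : ℝ) < p := by exact_mod_cast hp.one_lt
  have hq1 : ‖q - 1‖ < 1 := hq.trans_le <| Real.rpow_le_one_of_one_le_of_nonpos hp1.le <|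
    div_nonpos_of_nonpos_of_nonneg (by norm_num) (by linarith)
  have hqn : ‖q‖ ≤ 1 := norm_le_one_of_norm_sub_one_le_one hq1.le
  have h2 : ‖(2 : K)‖ = 1 := norm_two_eq_one_of_odd hpo (hnp ▸ inv_lt_one_of_one_lt₀ hp1)
  have hunit (j : ℕ) : ‖1 + q ^ j‖ = 1 :=
    norm_one_add_eq_one h2 ((norm_pow_sub_one_le hqn j).trans_lt hq1)
  refine ⟨‖(1 - q)⁻¹‖ ^ k, fun N _ a _ => ?_⟩
  set Q := q ^ (d * p ^ N)
  have h1q : ‖1 + q‖ = 1 := by simpa using hunit 1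
  have h1Q : ‖1 + Q‖ = 1 := hunit _
  have hqa : ‖q ^ a‖ ≤ 1 := (norm_pow_le q a).trans (pow_le_one₀ (norm_nonneg q) hqn)
  have hE : ‖qEulerPolyAt Q (q ^ a) k‖ ≤ ‖(1 - Q)⁻¹‖ ^ k :=
    norm_qEulerPolyAt_le hqa (fun l => by rw [← pow_mul]; exact hunit _) k
  calc _ = ‖(1 - q)⁻¹‖ ^ k * ‖1 - Q‖ ^ k * ‖qEulerPolyAt Q (q ^ a) k‖ := by
        simp only [norm_mul, norm_div, norm_pow, norm_neg, norm_one, one_pow, norm_inv,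
          h1q, h1Q]
        ring
    _ ≤ ‖(1 - q)⁻¹‖ ^ k * ‖1 - Q‖ ^ k * ‖(1 - Q)⁻¹‖ ^ k := by gcongr
    _ = ‖(1 - q)⁻¹‖ ^ k * (‖1 - Q‖ * ‖1 - Q‖⁻¹) ^ k := by
        rw [norm_inv (1 - Q), mul_pow, mul_assoc]
    _ ≤ ‖(1 - q)⁻¹‖ ^ k := mul_le_of_le_one_right (by positivity)
        (pow_le_one₀ (by positivity) mul_inv_le_one)

/-- Boundedness of the q-Euler measure: in a complete ultrametric field modeling
`ℂ_p` (odd prime `p`, `‖p‖ = 1/p`), for `‖q-1‖ < p^{-1/(p-1)}`, `k ≥ 1`, `d` odd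
coprime to `p`, there is a constant `M` with
`‖μ*_k(a + dp^N ℤ_p)‖ ≤ M` for all `N ≥ 1` and `0 ≤ a < dp^N`, where
`μ*_k(a + dp^N ℤ_p) = (-1)^a [dp^N]_q^k ([2]_q/[2]_{q^{dp^N}}) E_{k,q^{dp^N}}(a/(dp^N))`. -/
theorem qEuler_measure_bounded {K : Type*} [NontriviallyNormedField K]
    [CompleteSpace K] [CharZero K] [IsUltrametricDist K]
    (p : ℕ) (hp : Nat.Prime p) (hpo : Odd p) (hnp : ‖(p : K)‖ = (p : ℝ)⁻¹)
    (q : K) (hq : ‖q - 1‖ < (p : ℝ) ^ (-1 / ((p : ℝ) - 1)))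
    (k : ℕ) (hk : 1 ≤ k) (d : ℕ) (hdo : Odd d) (hd0 : 0 < d)
    (hcop : Nat.Coprime d p) :
    ∃ M : ℝ, ∀ N : ℕ, 1 ≤ N → ∀ a : ℕ, a < d * p ^ N →
      ‖(-1 : K) ^ a * ((1 - q ^ (d * p ^ N)) / (1 - q)) ^ k *
          ((1 + q) / (1 + q ^ (d * p ^ N))) *
            qEulerPolyAt (q ^ (d * p ^ N)) (q ^ a) k‖ ≤ M :=
  qEuler_measure_bounded_general p hp hpo hnp q hq k d
end
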